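/- Let γ > 1 and ℓ := 2/(γ−1). For every (V₋, C₋) ∈ ℝ² with 1+V₋ < C₋ < 0, there exists a unique (V₊, C₊) ∈ ℝ² with C₊ < 1+V₊ < 0 such that the pair satisfies the self-similar Rankine–Hugoniot relations. Conversely, for every (V₊, C₊) with C₊ < 1+V₊ < 0 there exists a unique (V₋, C₋) with 1+V₋ < C₋ < 0 such that the pair satisfies the self-similar Rankine–Hugoniot relations. (These are admissible self-similar 1-shocks in the case ξ̄/λ > 0, with left states in S¹₋ := {1+V < C < 0} and right states in S¹₊ := {C < 1+V < 0}.) -/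

import Mathlib

/-!
Write `ρ = |C|^ℓ` for the density and `j = ρ (1 + V)` for the mass flux. Since `ρ^(γ-1) = C²`,
the Rankine–Hugoniot relations say that both states carry the same `j` and the same momentum flux
`m_j(ρ) = j²/ρ + ρ^γ/γ`. For `j ≠ 0`, `m_j` decreases on `(0, s]` and increases on `[s, ∞)`, where
the sonic density `s` solves `s^(γ+1) = j²`, and it tends to `+∞` at both ends. With `C < 0` and
`j < 0`, the state lies in `S¹₋` exactly when `ρ < s` and in `S¹₊` exactly when `ρ > s`. Hence every
density on one side of `s` has exactly one partner on the other side with the same momentum flux,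
and a state with `C < 0` is determined by its `(ρ, j)`.
-/

/-- The self-similar Rankine–Hugoniot relations for the 1-d isentropic Euler
system (with `ℓ = 2/(γ−1)`), relating a left state `Pm = (V₋, C₋)` and a right
state `Pp = (V₊, C₊)`. -/
def RH (γ : ℝ) (Pm Pp : ℝ × ℝ) : Prop :=
  |Pm.2| ^ (2 / (γ - 1)) * (1 + Pm.1) = |Pp.2| ^ (2 / (γ - 1)) * (1 + Pp.1) ∧
  |Pm.2| ^ (2 / (γ - 1)) * ((1 + Pm.1) ^ 2 + Pm.2 ^ 2 / γ)
    = |Pp.2| ^ (2 / (γ - 1)) * ((1 + Pp.1) ^ 2 + Pp.2 ^ 2 / γ)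

open Real Set Filter Topology

theorem IsPreconnected.existsUnique_mem_sdiff_eq {X α : Type*} [TopologicalSpace X] [LinearOrder α]
    [TopologicalSpace α] [OrderClosedTopology α] {t : Set X} (ht : IsPreconnected t) {a : X}
    (ha : a ∈ t) {l : Filter X} [NeBot l] (hl : l ≤ 𝓟 t) {f : X → α} (hf : ContinuousOn f t)
    (hinj : InjOn f t) (hlim : Tendsto f l atTop) {v : α} (hv : f a < v) :
    ∃! x ∈ t \ {a}, f x = v := by
  obtain ⟨x, hxt, hfx⟩ := ht.intermediate_value_Ici ha hl hf hlim hv.le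
  have hxa : x ≠ a := by rintro rfl; exact hv.ne hfx
  exact ⟨x, ⟨⟨hxt, hxa⟩, hfx⟩, fun y ⟨hy, hfy⟩ => hinj hy.1 hxt (hfy.trans hfx.symm)⟩

namespace Shock

variable {γ : ℝ}

noncomputable def momentumFlux (γ j ρ : ℝ) : ℝ := j ^ 2 / ρ + ρ ^ γ / γ

noncomputable def sonicDensity (γ j : ℝ) : ℝ := (j ^ 2) ^ (γ + 1)⁻¹

section momentumFlux

variable {j ρ : ℝ}

theorem hasDerivAt_momentumFlux (hγ : γ ≠ 0) (hρ : 0 < ρ) :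
    HasDerivAt (momentumFlux γ j) ((ρ ^ (γ + 1) - j ^ 2) / ρ ^ 2) ρ := by
  have hinv := (hasDerivAt_inv hρ.ne').const_mul (j ^ 2)
  have hpow := (hasDerivAt_rpow_const (p := γ) (Or.inl hρ.ne')).div_const γ
  have hF : momentumFlux γ j = fun x => j ^ 2 * x⁻¹ + x ^ γ / γ := by
    funext x; rw [momentumFlux, div_eq_mul_inv]
  rw [hF]
  refine (hinv.add hpow).congr_deriv ?_
  rw [rpow_add hρ, rpow_sub_one hρ.ne', rpow_one]
  field_simp
  ring

theorem continuousOn_momentumFlux : ContinuousOn (momentumFlux γ j) (Ioi 0) :=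
  (continuousOn_const.div continuousOn_id fun _ hx => ne_of_gt hx).add
    ((continuousOn_id.rpow_const fun _ hx => Or.inl (ne_of_gt hx)).div_const γ)

theorem sonicDensity_nonneg : 0 ≤ sonicDensity γ j := by
  unfold sonicDensity; positivity

theorem sonicDensity_pos (hj : j ≠ 0) : 0 < sonicDensity γ j := by
  unfold sonicDensity; positivity

theorem lt_sonicDensity_iff (hγ : -1 < γ) (hρ : 0 ≤ ρ) :
    ρ < sonicDensity γ j ↔ ρ ^ (γ + 1) < j ^ 2 :=
  lt_rpow_inv_iff_of_pos hρ (sq_nonneg j) (by linarith)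

theorem sonicDensity_lt_iff (hγ : -1 < γ) (hρ : 0 ≤ ρ) :
    sonicDensity γ j < ρ ↔ j ^ 2 < ρ ^ (γ + 1) :=
  rpow_inv_lt_iff_of_pos (sq_nonneg j) hρ (by linarith)

theorem strictMonoOn_momentumFlux (hγ : 0 < γ) (hj : j ≠ 0) :
    StrictMonoOn (momentumFlux γ j) (Ici (sonicDensity γ j)) := by
  have hs := sonicDensity_pos (γ := γ) hj
  refine strictMonoOn_of_deriv_pos (convex_Ici _)
    (continuousOn_momentumFlux.mono fun x hx => hs.trans_le hx) fun x hx => ?_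
  rw [interior_Ici] at hx
  have hx0 : 0 < x := hs.trans hx
  rw [(hasDerivAt_momentumFlux hγ.ne' hx0).deriv]
  exact div_pos (sub_pos.2 ((sonicDensity_lt_iff (by linarith) hx0.le).1 hx)) (by positivity)

theorem strictAntiOn_momentumFlux (hγ : 0 < γ) :
    StrictAntiOn (momentumFlux γ j) (Ioc 0 (sonicDensity γ j)) := by
  refine strictAntiOn_of_deriv_neg (convex_Ioc _ _)
    (continuousOn_momentumFlux.mono Ioc_subset_Ioi_self) fun x hx => ?_
  rw [interior_Ioc] at hx
  rw [(hasDerivAt_momentumFlux hγ.ne' hx.1).deriv]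
  exact div_neg_of_neg_of_pos (sub_neg.2 ((lt_sonicDensity_iff (by linarith) hx.1.le).1 hx.2))
    (by positivity [hx.1])

theorem tendsto_momentumFlux_atTop (hγ : 0 < γ) : Tendsto (momentumFlux γ j) atTop atTop := by
  refine tendsto_atTop_mono' atTop ?_ ((tendsto_rpow_atTop hγ).atTop_div_const hγ)
  filter_upwards [eventually_gt_atTop 0] with ρ hρ
  exact le_add_of_nonneg_left (by positivity)

theorem tendsto_momentumFlux_nhdsGT_zero (hγ : 0 < γ) (hj : j ≠ 0) :
    Tendsto (momentumFlux γ j) (𝓝[>] 0) atTop := by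
  have hj2 : 0 < j ^ 2 := by positivity
  refine tendsto_atTop_mono' _ ?_ (tendsto_inv_nhdsGT_zero.const_mul_atTop hj2)
  filter_upwards [self_mem_nhdsWithin] with ρ (hρ : 0 < ρ)
  rw [momentumFlux, ← div_eq_mul_inv]
  exact le_add_of_nonneg_right (by positivity)

theorem existsUnique_momentumFlux_eq_of_lt_sonicDensity (hγ : 0 < γ) (hj : j ≠ 0)
    (hρ : ρ ∈ Ioo 0 (sonicDensity γ j)) :
    ∃! ρ' ∈ Ioi (sonicDensity γ j), momentumFlux γ j ρ' = momentumFlux γ j ρ := by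
  rw [← Ici_sdiff_left]
  exact isPreconnected_Ici.existsUnique_mem_sdiff_eq self_mem_Ici
    (le_principal_iff.2 (Ici_mem_atTop _))
    (continuousOn_momentumFlux.mono fun x hx => (sonicDensity_pos hj).trans_le hx)
    (strictMonoOn_momentumFlux hγ hj).injOn (tendsto_momentumFlux_atTop hγ)
    (strictAntiOn_momentumFlux hγ ⟨hρ.1, hρ.2.le⟩ ⟨hρ.1.trans hρ.2, le_rfl⟩ hρ.2)

theorem existsUnique_momentumFlux_eq_of_sonicDensity_lt (hγ : 0 < γ) (hj : j ≠ 0)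
    (hρ : sonicDensity γ j < ρ) :
    ∃! ρ' ∈ Ioo 0 (sonicDensity γ j), momentumFlux γ j ρ' = momentumFlux γ j ρ := by
  have hs := sonicDensity_pos (γ := γ) hj
  rw [← Ioc_sdiff_right]
  refine isPreconnected_Ioc.existsUnique_mem_sdiff_eq (right_mem_Ioc.2 hs)
    (by rw [← nhdsWithin_Ioc_eq_nhdsGT hs]; exact inf_le_right)
    (continuousOn_momentumFlux.mono Ioc_subset_Ioi_self)
    (strictAntiOn_momentumFlux hγ).injOn (tendsto_momentumFlux_nhdsGT_zero hγ hj)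
    (strictMonoOn_momentumFlux hγ hj self_mem_Ici hρ.le hρ)

end momentumFlux

noncomputable def density (γ : ℝ) (P : ℝ × ℝ) : ℝ := |P.2| ^ (2 / (γ - 1))

noncomputable def massFlux (γ : ℝ) (P : ℝ × ℝ) : ℝ := density γ P * (1 + P.1)

noncomputable def stateOf (γ ρ j : ℝ) : ℝ × ℝ := (j / ρ - 1, -ρ ^ ((γ - 1) / 2))

section state

variable {P : ℝ × ℝ} {ρ j : ℝ}

theorem density_pos (hC : P.2 ≠ 0) : 0 < density γ P :=
  rpow_pos_of_pos (abs_pos.2 hC) _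

theorem density_rpow_sub_one (hγ : γ ≠ 1) : density γ P ^ (γ - 1) = P.2 ^ 2 := by
  rw [density, ← rpow_mul (abs_nonneg _), div_mul_cancel₀ _ (sub_ne_zero.2 hγ), rpow_two, sq_abs]

theorem density_mul_eq_momentumFlux (hγ : γ ≠ 1) (hC : P.2 ≠ 0) :
    density γ P * ((1 + P.1) ^ 2 + P.2 ^ 2 / γ) = momentumFlux γ (massFlux γ P) (density γ P) := by
  have hρ := density_pos (γ := γ) hC
  have hρC := density_rpow_sub_one (P := P) hγ
  rw [rpow_sub_one hρ.ne'] at hρC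
  rw [momentumFlux, massFlux, ← hρC]
  field_simp

theorem RH_iff (hγ : γ ≠ 1) {Pm Pp : ℝ × ℝ} (hm : Pm.2 ≠ 0) (hp : Pp.2 ≠ 0) :
    RH γ Pm Pp ↔ massFlux γ Pm = massFlux γ Pp ∧
      momentumFlux γ (massFlux γ Pm) (density γ Pm)
        = momentumFlux γ (massFlux γ Pm) (density γ Pp) := by
  change massFlux γ Pm = massFlux γ Pp ∧ density γ Pm * _ = density γ Pp * _ ↔ _
  rw [density_mul_eq_momentumFlux hγ hm, density_mul_eq_momentumFlux hγ hp]
  exact and_congr_right fun h => by rw [h]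

theorem RH_comm {Pm Pp : ℝ × ℝ} : RH γ Pm Pp ↔ RH γ Pp Pm :=
  and_congr eq_comm eq_comm

theorem snd_stateOf_neg (hρ : 0 < ρ) : (stateOf γ ρ j).2 < 0 :=
  neg_neg_of_pos (rpow_pos_of_pos hρ _)

theorem density_stateOf (hγ : γ ≠ 1) (hρ : 0 < ρ) : density γ (stateOf γ ρ j) = ρ := by
  have hγ' : γ - 1 ≠ 0 := sub_ne_zero.2 hγ
  rw [density, stateOf, abs_neg, abs_of_pos (rpow_pos_of_pos hρ _), ← rpow_mul hρ.le]
  field_simp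
  exact rpow_one ρ

theorem massFlux_stateOf (hγ : γ ≠ 1) (hρ : 0 < ρ) : massFlux γ (stateOf γ ρ j) = j := by
  rw [massFlux, density_stateOf hγ hρ, stateOf]
  field_simp
  ring

theorem stateOf_density_massFlux (hγ : γ ≠ 1) (hC : P.2 < 0) :
    stateOf γ (density γ P) (massFlux γ P) = P := by
  have hρ := density_pos (γ := γ) hC.ne
  have hγ' : γ - 1 ≠ 0 := sub_ne_zero.2 hγ
  ext
  · rw [stateOf, massFlux]; field_simp; ring
  · have h1 : 2 / (γ - 1) * ((γ - 1) / 2) = 1 := by field_simp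
    rw [stateOf, density, ← rpow_mul (abs_nonneg _), h1, rpow_one, abs_of_neg hC, neg_neg]

theorem density_rpow_add_one (hγ : γ ≠ 1) (hC : P.2 ≠ 0) :
    density γ P ^ (γ + 1) = P.2 ^ 2 * density γ P ^ 2 := by
  rw [show γ + 1 = (γ - 1) + 2 by ring, rpow_add (density_pos hC), density_rpow_sub_one hγ, rpow_two]

theorem density_lt_sonicDensity_iff (hγ : 1 < γ) (hC : P.2 ≠ 0) :
    density γ P < sonicDensity γ (massFlux γ P) ↔ P.2 ^ 2 < (1 + P.1) ^ 2 := by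
  have hρ := density_pos (γ := γ) hC
  rw [lt_sonicDensity_iff (by linarith) hρ.le, density_rpow_add_one hγ.ne' hC, massFlux, mul_pow,
    mul_comm (density γ P ^ 2)]
  exact mul_lt_mul_iff_left₀ (by positivity)

theorem sonicDensity_lt_density_iff (hγ : 1 < γ) (hC : P.2 ≠ 0) :
    sonicDensity γ (massFlux γ P) < density γ P ↔ (1 + P.1) ^ 2 < P.2 ^ 2 := by
  have hρ := density_pos (γ := γ) hC
  rw [sonicDensity_lt_iff (by linarith) hρ.le, density_rpow_add_one hγ.ne' hC, massFlux, mul_pow,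
    mul_comm (density γ P ^ 2)]
  exact mul_lt_mul_iff_left₀ (by positivity)

theorem massFlux_neg_iff (hC : P.2 ≠ 0) : massFlux γ P < 0 ↔ 1 + P.1 < 0 := by
  have hρ := density_pos (γ := γ) hC
  exact ⟨fun h => neg_of_mul_neg_right h hρ.le, mul_neg_of_pos_of_neg hρ⟩

theorem supersonic_iff (hγ : 1 < γ) : (1 + P.1 < P.2 ∧ P.2 < 0) ↔
    P.2 < 0 ∧ massFlux γ P < 0 ∧ density γ P < sonicDensity γ (massFlux γ P) := by
  constructor
  · rintro ⟨hVC, hC⟩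
    exact ⟨hC, (massFlux_neg_iff hC.ne).2 (by linarith),
      (density_lt_sonicDensity_iff hγ hC.ne).2 (by nlinarith)⟩
  · rintro ⟨hC, hj, hρ⟩
    rw [massFlux_neg_iff hC.ne] at hj
    rw [density_lt_sonicDensity_iff hγ hC.ne] at hρ
    exact ⟨by nlinarith, hC⟩

theorem subsonic_iff (hγ : 1 < γ) : (P.2 < 1 + P.1 ∧ 1 + P.1 < 0) ↔
    P.2 < 0 ∧ massFlux γ P < 0 ∧ sonicDensity γ (massFlux γ P) < density γ P := by
  constructor
  · rintro ⟨hCV, hV⟩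
    have hC : P.2 < 0 := hCV.trans hV
    exact ⟨hC, (massFlux_neg_iff hC.ne).2 hV,
      (sonicDensity_lt_density_iff hγ hC.ne).2 (by nlinarith)⟩
  · rintro ⟨hC, hj, hρ⟩
    rw [massFlux_neg_iff hC.ne] at hj
    rw [sonicDensity_lt_density_iff hγ hC.ne] at hρ
    exact ⟨by nlinarith, hj⟩

theorem existsUnique_RH_partner (hγ : γ ≠ 1) (hC : P.2 < 0) {T : ℝ × ℝ → Prop} {D : Set ℝ}
    (hD : D ⊆ Ioi 0) (hT_neg : ∀ Q, T Q → Q.2 < 0)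
    (hT : ∀ Q : ℝ × ℝ, Q.2 < 0 → massFlux γ Q = massFlux γ P → (T Q ↔ density γ Q ∈ D))
    (hρ : ∃! ρ ∈ D, momentumFlux γ (massFlux γ P) ρ
      = momentumFlux γ (massFlux γ P) (density γ P)) :
    ∃! Q, T Q ∧ RH γ P Q := by
  obtain ⟨ρ, ⟨hρD, hρF⟩, hρ_unique⟩ := hρ
  have hρ0 : 0 < ρ := hD hρD
  have hQ := snd_stateOf_neg (γ := γ) (j := massFlux γ P) hρ0
  refine ⟨stateOf γ ρ (massFlux γ P), ⟨?_, ?_⟩, ?_⟩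
  · rw [hT _ hQ (massFlux_stateOf hγ hρ0), density_stateOf hγ hρ0]
    exact hρD
  · rw [RH_iff hγ hC.ne hQ.ne, massFlux_stateOf hγ hρ0, density_stateOf hγ hρ0]
    exact ⟨rfl, hρF.symm⟩
  · rintro Q ⟨hTQ, hRH⟩
    have hQ := hT_neg Q hTQ
    obtain ⟨hj, hF⟩ := (RH_iff hγ hC.ne hQ.ne).1 hRH
    rw [← stateOf_density_massFlux hγ hQ, ← hj,
      hρ_unique _ ⟨(hT Q hQ hj.symm).1 hTQ, hF.symm⟩]

end state

end Shock

open Shock in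
/-- admissible self-similar 1-shocks with `ξ̄/λ > 0`: each left
state in `S¹₋ = {1+V < C < 0}` has a unique right state in `S¹₊ = {C < 1+V < 0}`
satisfying the Rankine–Hugoniot relations, and conversely. -/
theorem stmt_14 (γ : ℝ) (hγ : 1 < γ) :
    (∀ Vm Cm : ℝ, 1 + Vm < Cm → Cm < 0 →
      ∃! Pp : ℝ × ℝ, (Pp.2 < 1 + Pp.1 ∧ 1 + Pp.1 < 0) ∧ RH γ (Vm, Cm) Pp) ∧
    (∀ Vp Cp : ℝ, Cp < 1 + Vp → 1 + Vp < 0 →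
      ∃! Pm : ℝ × ℝ, (1 + Pm.1 < Pm.2 ∧ Pm.2 < 0) ∧ RH γ Pm (Vp, Cp)) := by
  have hγ0 : 0 < γ := by linarith
  constructor
  · intro Vm Cm hVC hC
    obtain ⟨-, hj, hρ⟩ := (supersonic_iff (P := (Vm, Cm)) hγ).1 ⟨hVC, hC⟩
    refine existsUnique_RH_partner hγ.ne' hC (Ioi_subset_Ioi sonicDensity_nonneg)
      (fun Q hQ => hQ.1.trans hQ.2) (fun Q hQ hQj => ?_)
      (existsUnique_momentumFlux_eq_of_lt_sonicDensity hγ0 hj.ne ⟨density_pos hC.ne, hρ⟩)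
    rw [subsonic_iff hγ, hQj]
    simp [hQ, hj]
  · intro Vp Cp hCV hV
    obtain ⟨hC, hj, hρ⟩ := (subsonic_iff (P := (Vp, Cp)) hγ).1 ⟨hCV, hV⟩
    simp only [RH_comm (Pp := (Vp, Cp))]
    refine existsUnique_RH_partner hγ.ne' hC Ioo_subset_Ioi_self
      (fun Q hQ => hQ.2) (fun Q hQ hQj => ?_)
      (existsUnique_momentumFlux_eq_of_sonicDensity_lt hγ0 hj.ne hρ)
    rw [supersonic_iff hγ, hQj]
    simp [hQ, hj, density_pos hQ.ne]
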